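/- Let x = (F ←σ H →τ F*, ψ̄) be an ε-quadratic split preformation and let G be a f.g. free Λ-module with an epimorphism π : G ↠ H. Then there exists a regular ε-quadratic split preformation y = (F ←γ G →μ F*, θ̄) with γ = σπ, μ = τπ, θ̄ = ψ̄π, and y is elementary if and only if x is elementary. -/

import Mathlib

/-- The dual `Hom_Λ(M, Λ)` of a left module over a ring with involution,
made into a left `Λ`-module via `(a • f) x = f x * star a`. -/
def SDual (Λ : Type) [Ring Λ] [StarRing Λ] (M : Type) [AddCommGroup M] [Module Λ M] : Type :=
  M →ₗ[Λ] Λ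

namespace SDual

variable {Λ : Type} [Ring Λ] [StarRing Λ] {M N : Type} [AddCommGroup M] [Module Λ M]
  [AddCommGroup N] [Module Λ N]

instance : AddCommGroup (SDual Λ M) := inferInstanceAs (AddCommGroup (M →ₗ[Λ] Λ))

instance : FunLike (SDual Λ M) M Λ where
  coe f := ⇑(show M →ₗ[Λ] Λ from f)
  coe_injective := fun f g h => by
    have : (show M →ₗ[Λ] Λ from f) = (show M →ₗ[Λ] Λ from g) := DFunLike.coe_injective h
    exact this

@[simp] theorem add_apply (f g : SDual Λ M) (x : M) : (f + g) x = f x + g x := rfl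
@[simp] theorem zero_apply (x : M) : (0 : SDual Λ M) x = 0 := rfl
@[simp] theorem neg_apply (f : SDual Λ M) (x : M) : (-f) x = -(f x) := rfl
@[simp] theorem sub_apply (f g : SDual Λ M) (x : M) : (f - g) x = f x - g x := rfl

@[simp] theorem map_add (f : SDual Λ M) (x y : M) : f (x + y) = f x + f y :=
  (show M →ₗ[Λ] Λ from f).map_add x y

@[simp] theorem map_smul (f : SDual Λ M) (a : Λ) (x : M) : f (a • x) = a * f x :=
  (show M →ₗ[Λ] Λ from f).map_smul a x

instance : SMul Λ (SDual Λ M) where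
  smul a f := show M →ₗ[Λ] Λ from
    { toFun := fun x => f x * star a
      map_add' := fun x y => by simp [add_mul]
      map_smul' := fun c x => by simp [mul_assoc] }

@[simp] theorem smul_apply (a : Λ) (f : SDual Λ M) (x : M) : (a • f) x = f x * star a := rfl

instance : Module Λ (SDual Λ M) where
  one_smul f := DFunLike.ext _ _ fun x => by simp
  mul_smul a b f := DFunLike.ext _ _ fun x => by simp [star_mul, mul_assoc]
  smul_zero a := DFunLike.ext _ _ fun x => by simp
  smul_add a f g := DFunLike.ext _ _ fun x => by simp [add_mul]
  add_smul a b f := DFunLike.ext _ _ fun x => by simp [star_add, mul_add]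
  zero_smul f := DFunLike.ext _ _ fun x => by simp

/-- Build an element of `SDual Λ M` from a function. -/
def ofFun (g : M → Λ) (h1 : ∀ x y, g (x + y) = g x + g y)
    (h2 : ∀ (a : Λ) (x : M), g (a • x) = a * g x) : SDual Λ M :=
  show M →ₗ[Λ] Λ from
    { toFun := g
      map_add' := h1
      map_smul' := fun a x => by simp [h2, smul_eq_mul] }

@[simp] theorem ofFun_apply (g : M → Λ) (h1 : ∀ x y, g (x + y) = g x + g y)
    (h2 : ∀ (a : Λ) (x : M), g (a • x) = a * g x) (x : M) : ofFun g h1 h2 x = g x := rfl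

/-- The `ε`-twisted dual `T_ε θ` of a form `θ : M → M^*`:
`(T_ε θ) x y = ε * star (θ y x)`; for f.g. projective `M` this corresponds to
`εθ^*` under `M ≅ M^{**}`. -/
def Tform (ε : Λ) (hc : ∀ a : Λ, ε * a = a * ε) (θ : M →ₗ[Λ] SDual Λ M) :
    M →ₗ[Λ] SDual Λ M where
  toFun x := ofFun (fun y => ε * star (θ y x))
    (fun y y' => by
      show ε * star (θ (y + y') x) = ε * star (θ y x) + ε * star (θ y' x)
      rw [_root_.map_add θ y y', add_apply, star_add, mul_add])
    (fun a y => by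
      show ε * star (θ (a • y) x) = a * (ε * star (θ y x))
      rw [_root_.map_smul θ a y, smul_apply, star_mul, star_star, ← mul_assoc, hc a, mul_assoc])
  map_add' x x' := DFunLike.ext _ _ fun y => by simp [star_add, mul_add]
  map_smul' a x := by
    simp only [RingHom.id_apply]
    exact DFunLike.ext _ _ fun y => by simp [star_mul, mul_assoc]

@[simp] theorem Tform_apply (ε : Λ) (hc : ∀ a : Λ, ε * a = a * ε) (θ : M →ₗ[Λ] SDual Λ M)
    (x y : M) : Tform ε hc θ x y = ε * star (θ y x) := rfl

end SDual

namespace SDual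

variable {Λ : Type} [Ring Λ] [StarRing Λ] {M N : Type} [AddCommGroup M] [Module Λ M]
  [AddCommGroup N] [Module Λ N]

/-- The pullback (dual map) `u^* : M^* → N^*` along a linear map `u : N → M`,
given by `f ↦ f ∘ u`. -/
def pullback (u : N →ₗ[Λ] M) : SDual Λ M →ₗ[Λ] SDual Λ N where
  toFun f := ofFun (fun x => f (u x)) (fun x y => by simp) (fun a x => by simp)
  map_add' f g := DFunLike.ext _ _ fun x => by simp
  map_smul' a f := by
    simp only [RingHom.id_apply]
    exact DFunLike.ext _ _ fun x => by simp

@[simp] theorem pullback_apply (u : N →ₗ[Λ] M) (f : SDual Λ M) (x : N) :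
    pullback u f x = f (u x) := rfl

end SDual

/-- The additive subgroup `{b - ε * star b | b ∈ Λ}` of `Λ`. -/
def qSub (Λ : Type) [Ring Λ] [StarRing Λ] (ε : Λ) : AddSubgroup Λ :=
  AddMonoidHom.range
    { toFun := fun b => b - ε * star b
      map_zero' := by simp
      map_add' := fun a b => by
        show a + b - ε * star (a + b) = (a - ε * star a) + (b - ε * star b)
        rw [star_add, mul_add]; abel }

/-- `Q_ε(Λ) = Λ / {b - ε * star b}`; in particular `QL Λ (-ε)` is `Q_{−ε}(Λ)`. -/
abbrev QL (Λ : Type) [Ring Λ] [StarRing Λ] (ε : Λ) : Type := Λ ⧸ qSub Λ ε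

/-- Elementariness of an `ε`-quadratic split preformation `(F ←γ G →μ F*, θ̄)`
with respect to some f.g. free submodule `U ⊆ G`: the restriction of `θ̄` to `U`
vanishes and the sequence `0 → U →(μ|U) F* →((γ|U)*) U* → 0` is exact. -/
def IsElementary (Λ : Type) [Ring Λ] [StarRing Λ] (ε : Λ)
    {F G : Type} [AddCommGroup F] [Module Λ F] [AddCommGroup G] [Module Λ G]
    (γ : G →ₗ[Λ] F) (μ : G →ₗ[Λ] SDual Λ F) (θb : G → QL Λ (-ε)) : Prop :=
  ∃ U : Submodule Λ G, Module.Free Λ U ∧ Module.Finite Λ U ∧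
    (∀ u ∈ U, θb u = 0) ∧
    Function.Injective (μ.comp U.subtype) ∧
    LinearMap.range (μ.comp U.subtype) = LinearMap.ker (SDual.pullback (γ.comp U.subtype)) ∧
    Function.Surjective (SDual.pullback (γ.comp U.subtype))

section Aux

variable {Λ : Type} [Ring Λ] [StarRing Λ] {F M N : Type}
  [AddCommGroup F] [Module Λ F] [AddCommGroup M] [Module Λ M] [AddCommGroup N] [Module Λ N]

theorem pullback_comp (C : N →ₗ[Λ] F) (f : M →ₗ[Λ] N) :
    SDual.pullback (C.comp f) = (SDual.pullback f).comp (SDual.pullback C) :=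
  LinearMap.ext fun g => DFunLike.ext _ _ fun _ => rfl

theorem pullback_inj (f : M →ₗ[Λ] N) (hf : Function.Surjective f) :
    Function.Injective (SDual.pullback f : SDual Λ N →ₗ[Λ] SDual Λ M) := by
  intro g g' h
  refine DFunLike.ext _ _ fun n => ?_
  obtain ⟨m, rfl⟩ := hf n
  exact DFunLike.congr_fun h m

theorem pullback_surj (f : M →ₗ[Λ] N) (hf : Function.Bijective f) :
    Function.Surjective (SDual.pullback f : SDual Λ N →ₗ[Λ] SDual Λ M) := by
  intro h
  let e := LinearEquiv.ofBijective f hf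
  refine ⟨SDual.pullback (e.symm : N →ₗ[Λ] M) h, DFunLike.ext _ _ fun x => ?_⟩
  show h (e.symm (f x)) = h x
  have : e.symm (f x) = x := e.symm_apply_apply x
  rw [this]

theorem elem_transfer (C : N →ₗ[Λ] F) (B : N →ₗ[Λ] SDual Λ F) (f : M →ₗ[Λ] N)
    (hf : Function.Bijective f) :
    (Function.Injective (B.comp f) ↔ Function.Injective B) ∧
    (LinearMap.range (B.comp f) = LinearMap.ker (SDual.pullback (C.comp f)) ↔
      LinearMap.range B = LinearMap.ker (SDual.pullback C)) ∧
    (Function.Surjective (SDual.pullback (C.comp f)) ↔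
      Function.Surjective (SDual.pullback C)) := by
  have hrange : LinearMap.range (B.comp f) = LinearMap.range B :=
    LinearMap.range_comp_of_range_eq_top B (LinearMap.range_eq_top.mpr hf.2)
  have hker : LinearMap.ker (SDual.pullback (C.comp f)) = LinearMap.ker (SDual.pullback C) := by
    rw [pullback_comp]
    exact LinearMap.ker_comp_of_ker_eq_bot _
      (LinearMap.ker_eq_bot.mpr (pullback_inj f hf.2))
  refine ⟨⟨?_, ?_⟩, by rw [hrange, hker], ?_⟩
  · intro hi b b' hbb'
    obtain ⟨m, rfl⟩ := hf.2 b
    obtain ⟨m', rfl⟩ := hf.2 b'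
    exact congrArg f (hi (show (B.comp f) m = (B.comp f) m' from hbb'))
  · intro hB
    rw [LinearMap.coe_comp]
    exact hB.comp hf.1
  · rw [pullback_comp, LinearMap.coe_comp]
    constructor
    · intro hs g
      obtain ⟨x, hx⟩ := hs (SDual.pullback f g)
      exact ⟨x, pullback_inj f hf.2 hx⟩
    · intro hs
      exact (pullback_surj f hf).comp hs

end Aux

/-- Let `x = (F ←σ H →τ F*, ψ̄)` be an `ε`-quadratic split
preformation and `G` a f.g. free module with an epimorphism `π : G ↠ H`.  Then
there is a regular `ε`-quadratic split preformation `y = (F ←γ G →μ F*, θ̄)`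
with `γ = σπ`, `μ = τπ`, `θ̄ = ψ̄π`, and `y` is elementary if and only if `x`
is elementary. -/
theorem stmt_6 (Λ : Type) [Ring Λ] [StarRing Λ]
    (hwf : ∀ (k : ℕ) (a b : Matrix (Fin k) (Fin k) Λ), a * b = 1 → b * a = 1)
    (ε : Λ) (hε : ε = 1 ∨ ε = -1)
    (F G H : Type) [AddCommGroup F] [Module Λ F] [Module.Free Λ F] [Module.Finite Λ F]
    [AddCommGroup G] [Module Λ G] [Module.Free Λ G] [Module.Finite Λ G]
    [AddCommGroup H] [Module Λ H] [Module.Finite Λ H]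
    (σ : H →ₗ[Λ] F) (τ : H →ₗ[Λ] SDual Λ F) (ψb : H → QL Λ (-ε))
    (hsymm : ∀ h h' : H, τ h (σ h') = -(ε * star (τ h' (σ h))))
    (π : G →ₗ[Λ] H) (hπ : Function.Surjective π) :
    ∃ (γ : G →ₗ[Λ] F) (μ : G →ₗ[Λ] SDual Λ F) (θb : G → QL Λ (-ε)),
      γ = σ.comp π ∧ μ = τ.comp π ∧ (∀ g : G, θb g = ψb (π g)) ∧
      (IsElementary Λ ε γ μ θb ↔ IsElementary Λ ε σ τ ψb) := by
  refine ⟨σ.comp π, τ.comp π, fun g => ψb (π g), rfl, rfl, fun g => rfl, ?_⟩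
  constructor
  · rintro ⟨U, hfree, hfin, hθ, hinj, hrk, hsurj⟩
    have hp : Function.Injective (π.comp U.subtype) := by
      intro u u' h
      exact hinj (show τ (π (U.subtype u)) = τ (π (U.subtype u')) from
        congrArg τ h)
    set p := π.comp U.subtype with hpdef
    set V := LinearMap.range p with hVdef
    let e : U ≃ₗ[Λ] V := LinearEquiv.ofInjective p hp
    have he : ∀ u : U, π (u : G) = ((e u : V) : H) := fun u =>
      (LinearEquiv.ofInjective_apply p u).symm
    have hBe : (τ.comp V.subtype).comp (e : U →ₗ[Λ] V) = (τ.comp π).comp U.subtype :=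
      LinearMap.ext fun u => congrArg τ (he u).symm
    have hCe : (σ.comp V.subtype).comp (e : U →ₗ[Λ] V) = (σ.comp π).comp U.subtype :=
      LinearMap.ext fun u => congrArg σ (he u).symm
    obtain ⟨h1, h2, h3⟩ := elem_transfer (σ.comp V.subtype) (τ.comp V.subtype)
      (e : U →ₗ[Λ] V) e.bijective
    haveI := hfree; haveI := hfin
    refine ⟨V, Module.Free.of_equiv e, Module.Finite.equiv e, ?_, ?_, ?_, ?_⟩
    · rintro v ⟨u, rfl⟩
      exact hθ u u.2
    · exact h1.mp (by rw [hBe]; exact hinj)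
    · exact h2.mp (by rw [hBe, hCe]; exact hrk)
    · exact h3.mp (by rw [hCe]; exact hsurj)
  · rintro ⟨V, hfree, hfin, hθ, hinj, hrk, hsurj⟩
    haveI := hfree; haveI := hfin
    obtain ⟨s, hs⟩ := Module.projective_lifting_property π V.subtype hπ
    have hπs : ∀ v : V, π (s v) = (v : H) := fun v => DFunLike.congr_fun hs v
    have hsinj : Function.Injective s := by
      intro v v' h
      exact Subtype.ext (by rw [← hπs v, ← hπs v', h])
    set U := LinearMap.range s with hUdef
    let e' : V ≃ₗ[Λ] U := LinearEquiv.ofInjective s hsinj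
    have he' : ∀ v : V, ((e' v : U) : G) = s v := fun v =>
      LinearEquiv.ofInjective_apply s v
    have hBe : (((τ.comp π).comp U.subtype).comp (e' : V →ₗ[Λ] U)) = τ.comp V.subtype :=
      LinearMap.ext fun v => congrArg τ (by
        show π (((e' v : U) : G)) = (v : H)
        rw [he' v]; exact hπs v)
    have hCe : (((σ.comp π).comp U.subtype).comp (e' : V →ₗ[Λ] U)) = σ.comp V.subtype :=
      LinearMap.ext fun v => congrArg σ (by
        show π (((e' v : U) : G)) = (v : H)
        rw [he' v]; exact hπs v)
    obtain ⟨h1, h2, h3⟩ := elem_transfer ((σ.comp π).comp U.subtype)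
      ((τ.comp π).comp U.subtype) (e' : V →ₗ[Λ] U) e'.bijective
    refine ⟨U, Module.Free.of_equiv e', Module.Finite.equiv e', ?_, ?_, ?_, ?_⟩
    · rintro u ⟨v, rfl⟩
      show ψb (π (s v)) = 0
      rw [hπs v]
      exact hθ v v.2
    · exact h1.mp (by rw [hBe]; exact hinj)
    · exact h2.mp (by rw [hBe, hCe]; exact hrk)
    · exact h3.mp (by rw [hCe]; exact hsurj)
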